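/- For any choice of vertices V₁, …, V₅ ∈ ℝ³, the determinant J of the Jacobian of the vertex mapping F, when composed with the Duffy-type map, is bilinear in (a,b) and independent of c: there exist real numbers α₀, α₁, α₂, α₃ such that for all a, b ∈ [−1,1] and c ∈ [−1,1), J(D(a,b,c)) = α₀ + α₁·a + α₂·b + α₃·a·b. -/
import Mathlib


/-- The Duffy-type map `D : ℝ³ → ℝ³`. -/
noncomputable def duffyMap (p : ℝ × ℝ × ℝ) : ℝ × ℝ × ℝ :=
  ((1 + p.1) * (1 - p.2.2) / 2 - 1, (1 + p.2.1) * (1 - p.2.2) / 2 - 1, p.2.2)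

/-- The Bedrosian vertex functions on the bi-unit reference pyramid. -/
noncomputable def bedrosian : Fin 5 → ℝ × ℝ × ℝ → ℝ
  | 0 => fun p => (p.1 + p.2.2) * (p.2.1 + p.2.2) / (2 * (1 - p.2.2))
  | 1 => fun p => -((p.1 + 1) * (p.2.1 + p.2.2)) / (2 * (1 - p.2.2))
  | 2 => fun p => (p.1 + 1) * (p.2.1 + 1) / (2 * (1 - p.2.2))
  | 3 => fun p => -((p.1 + p.2.2) * (p.2.1 + 1)) / (2 * (1 - p.2.2))
  | 4 => fun p => (1 + p.2.2) / 2

/-- The vertex mapping `F(r,s,t) = ∑ᵢ Vᵢ · vᵢ(r,s,t)` associated with vertices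
`V₁, …, V₅ ∈ ℝ³`. -/
noncomputable def vertexMap (V : Fin 5 → ℝ × ℝ × ℝ) (p : ℝ × ℝ × ℝ) : ℝ × ℝ × ℝ :=
  ∑ i : Fin 5, bedrosian i p • V i

/-- The Jacobian matrix of a map `F : ℝ³ → ℝ³` at a point `p`: the 3×3 matrix whose
`(i,j)` entry is the partial derivative of the `i`-th component of `F` with respect to
the `j`-th variable at `p`. -/
noncomputable def jacobianMatrix (F : ℝ × ℝ × ℝ → ℝ × ℝ × ℝ) (p : ℝ × ℝ × ℝ) :
    Matrix (Fin 3) (Fin 3) ℝ :=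
  Matrix.of
    ![![(fderiv ℝ F p (1, 0, 0)).1, (fderiv ℝ F p (0, 1, 0)).1, (fderiv ℝ F p (0, 0, 1)).1],
      ![(fderiv ℝ F p (1, 0, 0)).2.1, (fderiv ℝ F p (0, 1, 0)).2.1, (fderiv ℝ F p (0, 0, 1)).2.1],
      ![(fderiv ℝ F p (1, 0, 0)).2.2, (fderiv ℝ F p (0, 1, 0)).2.2, (fderiv ℝ F p (0, 0, 1)).2.2]]

set_option maxHeartbeats 4000000 in
/-- For any vertices `V₁, …, V₅ ∈ ℝ³`, the determinant `J` of the Jacobian of the vertex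
mapping `F`, composed with the Duffy-type map, is bilinear in `(a,b)` and independent of
`c`: there are reals `α₀, α₁, α₂, α₃` with
`J(D(a,b,c)) = α₀ + α₁·a + α₂·b + α₃·a·b` for all `a, b ∈ [−1,1]`, `c ∈ [−1,1)`. -/
theorem vertexMap_jacobian_det_bilinear (V : Fin 5 → ℝ × ℝ × ℝ) :
    ∃ α₀ α₁ α₂ α₃ : ℝ, ∀ a b c : ℝ,
      a ∈ Set.Icc (-1 : ℝ) 1 → b ∈ Set.Icc (-1 : ℝ) 1 → c ∈ Set.Ico (-1 : ℝ) 1 →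
      (jacobianMatrix (vertexMap V) (duffyMap (a, b, c))).det
        = α₀ + α₁ * a + α₂ * b + α₃ * (a * b) := by
  refine ⟨(-1/16:ℝ) * (V 2).2.2 * (V 3).2.1 * (V 4).1 + (1/16:ℝ) * (V 2).2.2 * (V 3).1 * (V 4).2.1 + (1/16:ℝ) * (V 2).2.1 * (V 3).2.2 * (V 4).1 + (-1/16:ℝ) * (V 2).2.1 * (V 3).1 * (V 4).2.2 + (-1/16:ℝ) * (V 2).1 * (V 3).2.2 * (V 4).2.1 + (1/16:ℝ) * (V 2).1 * (V 3).2.1 * (V 4).2.2 + (-1/16:ℝ) * (V 1).2.2 * (V 2).2.1 * (V 4).1 + (1/32:ℝ) * (V 1).2.2 * (V 2).2.1 * (V 3).1 + (1/16:ℝ) * (V 1).2.2 * (V 2).1 * (V 4).2.1 + (-1/32:ℝ) * (V 1).2.2 * (V 2).1 * (V 3).2.1 + (1/16:ℝ) * (V 1).2.1 * (V 2).2.2 * (V 4).1 + (-1/32:ℝ) * (V 1).2.1 * (V 2).2.2 * (V 3).1 + (-1/16:ℝ) * (V 1).2.1 * (V 2).1 * (V 4).2.2 + (1/32:ℝ)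 * (V 1).2.1 * (V 2).1 * (V 3).2.2 + (-1/16:ℝ) * (V 1).1 * (V 2).2.2 * (V 4).2.1 + (1/32:ℝ) * (V 1).1 * (V 2).2.2 * (V 3).2.1 + (1/16:ℝ) * (V 1).1 * (V 2).2.1 * (V 4).2.2 + (-1/32:ℝ) * (V 1).1 * (V 2).2.1 * (V 3).2.2 + (1/16:ℝ) * (V 0).2.2 * (V 3).2.1 * (V 4).1 + (-1/16:ℝ) * (V 0).2.2 * (V 3).1 * (V 4).2.1 + (1/32:ℝ) * (V 0).2.2 * (V 2).2.1 * (V 3).1 + (-1/32:ℝ) * (V 0).2.2 * (V 2).1 * (V 3).2.1 + (-1/16:ℝ) * (V 0).2.2 * (V 1).2.1 * (V 4).1 + (1/32:ℝ) * (V 0).2.2 * (V 1).2.1 * (V 3).1 + (1/32:ℝ) * (V 0).2.2 * (V 1).2.1 * (V 2).1 + (1/16:ℝ) * (V 0).2.2 * (V 1).1 * (V 4).2.1 + (-1/32:ℝ) * (V 0).2.2 * (V 1).1 * (V 3).2.1 + (-1/32:ℝ) * (V 0).2.2 * (V 1).1 * (V 2).2.1 + (-1/16:ℝ) * (V 0).2.1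 * (V 3).2.2 * (V 4).1 + (1/16:ℝ) * (V 0).2.1 * (V 3).1 * (V 4).2.2 + (-1/32:ℝ) * (V 0).2.1 * (V 2).2.2 * (V 3).1 + (1/32:ℝ) * (V 0).2.1 * (V 2).1 * (V 3).2.2 + (1/16:ℝ) * (V 0).2.1 * (V 1).2.2 * (V 4).1 + (-1/32:ℝ) * (V 0).2.1 * (V 1).2.2 * (V 3).1 + (-1/32:ℝ) * (V 0).2.1 * (V 1).2.2 * (V 2).1 + (-1/16:ℝ) * (V 0).2.1 * (V 1).1 * (V 4).2.2 + (1/32:ℝ) * (V 0).2.1 * (V 1).1 * (V 3).2.2 + (1/32:ℝ) * (V 0).2.1 * (V 1).1 * (V 2).2.2 + (1/16:ℝ) * (V 0).1 * (V 3).2.2 * (V 4).2.1 + (-1/16:ℝ) * (V 0).1 * (V 3).2.1 * (V 4).2.2 + (1/32:ℝ) * (V 0).1 * (V 2).2.2 * (V 3).2.1 + (-1/32:ℝ) * (V 0).1 * (V 2).2.1 * (V 3).2.2 + (-1/16:ℝ) * (V 0).1 * (V 1).2.2 * (V 4).2.1 + (1/32:ℝ) * (V 0).1 * (V 1).2.2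 * (V 3).2.1 + (1/32:ℝ) * (V 0).1 * (V 1).2.2 * (V 2).2.1 + (1/16:ℝ) * (V 0).1 * (V 1).2.1 * (V 4).2.2 + (-1/32:ℝ) * (V 0).1 * (V 1).2.1 * (V 3).2.2 + (-1/32:ℝ) * (V 0).1 * (V 1).2.1 * (V 2).2.2,
    (1/16:ℝ) * (V 1).2.2 * (V 3).2.1 * (V 4).1 + (-1/16:ℝ) * (V 1).2.2 * (V 3).1 * (V 4).2.1 + (-1/16:ℝ) * (V 1).2.2 * (V 2).2.1 * (V 4).1 + (1/32:ℝ) * (V 1).2.2 * (V 2).2.1 * (V 3).1 + (1/16:ℝ) * (V 1).2.2 * (V 2).1 * (V 4).2.1 + (-1/32:ℝ) * (V 1).2.2 * (V 2).1 * (V 3).2.1 + (-1/16:ℝ) * (V 1).2.1 * (V 3).2.2 * (V 4).1 + (1/16:ℝ) * (V 1).2.1 * (V 3).1 * (V 4).2.2 + (1/16:ℝ) * (V 1).2.1 * (V 2).2.2 * (V 4).1 + (-1/32:ℝ) * (V 1).2.1 * (V 2).2.2 * (V 3).1 + (-1/16:ℝ) * (V 1).2.1 * (V 2).1 * (V 4).2.2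 + (1/32:ℝ) * (V 1).2.1 * (V 2).1 * (V 3).2.2 + (1/16:ℝ) * (V 1).1 * (V 3).2.2 * (V 4).2.1 + (-1/16:ℝ) * (V 1).1 * (V 3).2.1 * (V 4).2.2 + (-1/16:ℝ) * (V 1).1 * (V 2).2.2 * (V 4).2.1 + (1/32:ℝ) * (V 1).1 * (V 2).2.2 * (V 3).2.1 + (1/16:ℝ) * (V 1).1 * (V 2).2.1 * (V 4).2.2 + (-1/32:ℝ) * (V 1).1 * (V 2).2.1 * (V 3).2.2 + (-1/16:ℝ) * (V 0).2.2 * (V 3).2.1 * (V 4).1 + (1/16:ℝ) * (V 0).2.2 * (V 3).1 * (V 4).2.1 + (1/16:ℝ) * (V 0).2.2 * (V 2).2.1 * (V 4).1 + (-1/32:ℝ) * (V 0).2.2 * (V 2).2.1 * (V 3).1 + (-1/16:ℝ) * (V 0).2.2 * (V 2).1 * (V 4).2.1 + (1/32:ℝ) * (V 0).2.2 * (V 2).1 * (V 3).2.1 + (-1/32:ℝ) * (V 0).2.2 * (V 1).2.1 * (V 3).1 + (1/32:ℝ) * (V 0).2.2 * (V 1).2.1 * (V 2).1 + (1/32:ℝ)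 * (V 0).2.2 * (V 1).1 * (V 3).2.1 + (-1/32:ℝ) * (V 0).2.2 * (V 1).1 * (V 2).2.1 + (1/16:ℝ) * (V 0).2.1 * (V 3).2.2 * (V 4).1 + (-1/16:ℝ) * (V 0).2.1 * (V 3).1 * (V 4).2.2 + (-1/16:ℝ) * (V 0).2.1 * (V 2).2.2 * (V 4).1 + (1/32:ℝ) * (V 0).2.1 * (V 2).2.2 * (V 3).1 + (1/16:ℝ) * (V 0).2.1 * (V 2).1 * (V 4).2.2 + (-1/32:ℝ) * (V 0).2.1 * (V 2).1 * (V 3).2.2 + (1/32:ℝ) * (V 0).2.1 * (V 1).2.2 * (V 3).1 + (-1/32:ℝ) * (V 0).2.1 * (V 1).2.2 * (V 2).1 + (-1/32:ℝ) * (V 0).2.1 * (V 1).1 * (V 3).2.2 + (1/32:ℝ) * (V 0).2.1 * (V 1).1 * (V 2).2.2 + (-1/16:ℝ) * (V 0).1 * (V 3).2.2 * (V 4).2.1 + (1/16:ℝ) * (V 0).1 * (V 3).2.1 * (V 4).2.2 + (1/16:ℝ) * (V 0).1 * (V 2).2.2 * (V 4).2.1 + (-1/32:ℝ) * (V 0).1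 * (V 2).2.2 * (V 3).2.1 + (-1/16:ℝ) * (V 0).1 * (V 2).2.1 * (V 4).2.2 + (1/32:ℝ) * (V 0).1 * (V 2).2.1 * (V 3).2.2 + (-1/32:ℝ) * (V 0).1 * (V 1).2.2 * (V 3).2.1 + (1/32:ℝ) * (V 0).1 * (V 1).2.2 * (V 2).2.1 + (1/32:ℝ) * (V 0).1 * (V 1).2.1 * (V 3).2.2 + (-1/32:ℝ) * (V 0).1 * (V 1).2.1 * (V 2).2.2,
    (-1/16:ℝ) * (V 2).2.2 * (V 3).2.1 * (V 4).1 + (1/16:ℝ) * (V 2).2.2 * (V 3).1 * (V 4).2.1 + (1/16:ℝ) * (V 2).2.1 * (V 3).2.2 * (V 4).1 + (-1/16:ℝ) * (V 2).2.1 * (V 3).1 * (V 4).2.2 + (-1/16:ℝ) * (V 2).1 * (V 3).2.2 * (V 4).2.1 + (1/16:ℝ) * (V 2).1 * (V 3).2.1 * (V 4).2.2 + (1/16:ℝ) * (V 1).2.2 * (V 3).2.1 * (V 4).1 + (-1/16:ℝ) * (V 1).2.2 * (V 3).1 * (V 4).2.1 + (1/32:ℝ) * (V 1).2.2 * (V 2).2.1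 * (V 3).1 + (-1/32:ℝ) * (V 1).2.2 * (V 2).1 * (V 3).2.1 + (-1/16:ℝ) * (V 1).2.1 * (V 3).2.2 * (V 4).1 + (1/16:ℝ) * (V 1).2.1 * (V 3).1 * (V 4).2.2 + (-1/32:ℝ) * (V 1).2.1 * (V 2).2.2 * (V 3).1 + (1/32:ℝ) * (V 1).2.1 * (V 2).1 * (V 3).2.2 + (1/16:ℝ) * (V 1).1 * (V 3).2.2 * (V 4).2.1 + (-1/16:ℝ) * (V 1).1 * (V 3).2.1 * (V 4).2.2 + (1/32:ℝ) * (V 1).1 * (V 2).2.2 * (V 3).2.1 + (-1/32:ℝ) * (V 1).1 * (V 2).2.1 * (V 3).2.2 + (-1/16:ℝ) * (V 0).2.2 * (V 2).2.1 * (V 4).1 + (1/32:ℝ) * (V 0).2.2 * (V 2).2.1 * (V 3).1 + (1/16:ℝ) * (V 0).2.2 * (V 2).1 * (V 4).2.1 + (-1/32:ℝ) * (V 0).2.2 * (V 2).1 * (V 3).2.1 + (1/16:ℝ) * (V 0).2.2 * (V 1).2.1 * (V 4).1 + (-1/32:ℝ) * (V 0).2.2 * (V 1).2.1 * (V 3).1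 + (-1/32:ℝ) * (V 0).2.2 * (V 1).2.1 * (V 2).1 + (-1/16:ℝ) * (V 0).2.2 * (V 1).1 * (V 4).2.1 + (1/32:ℝ) * (V 0).2.2 * (V 1).1 * (V 3).2.1 + (1/32:ℝ) * (V 0).2.2 * (V 1).1 * (V 2).2.1 + (1/16:ℝ) * (V 0).2.1 * (V 2).2.2 * (V 4).1 + (-1/32:ℝ) * (V 0).2.1 * (V 2).2.2 * (V 3).1 + (-1/16:ℝ) * (V 0).2.1 * (V 2).1 * (V 4).2.2 + (1/32:ℝ) * (V 0).2.1 * (V 2).1 * (V 3).2.2 + (-1/16:ℝ) * (V 0).2.1 * (V 1).2.2 * (V 4).1 + (1/32:ℝ) * (V 0).2.1 * (V 1).2.2 * (V 3).1 + (1/32:ℝ) * (V 0).2.1 * (V 1).2.2 * (V 2).1 + (1/16:ℝ) * (V 0).2.1 * (V 1).1 * (V 4).2.2 + (-1/32:ℝ) * (V 0).2.1 * (V 1).1 * (V 3).2.2 + (-1/32:ℝ) * (V 0).2.1 * (V 1).1 * (V 2).2.2 + (-1/16:ℝ) * (V 0).1 * (V 2).2.2 * (V 4).2.1 + (1/32:ℝ)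 * (V 0).1 * (V 2).2.2 * (V 3).2.1 + (1/16:ℝ) * (V 0).1 * (V 2).2.1 * (V 4).2.2 + (-1/32:ℝ) * (V 0).1 * (V 2).2.1 * (V 3).2.2 + (1/16:ℝ) * (V 0).1 * (V 1).2.2 * (V 4).2.1 + (-1/32:ℝ) * (V 0).1 * (V 1).2.2 * (V 3).2.1 + (-1/32:ℝ) * (V 0).1 * (V 1).2.2 * (V 2).2.1 + (-1/16:ℝ) * (V 0).1 * (V 1).2.1 * (V 4).2.2 + (1/32:ℝ) * (V 0).1 * (V 1).2.1 * (V 3).2.2 + (1/32:ℝ) * (V 0).1 * (V 1).2.1 * (V 2).2.2,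
    (1/32:ℝ) * (V 1).2.2 * (V 2).2.1 * (V 3).1 + (-1/32:ℝ) * (V 1).2.2 * (V 2).1 * (V 3).2.1 + (-1/32:ℝ) * (V 1).2.1 * (V 2).2.2 * (V 3).1 + (1/32:ℝ) * (V 1).2.1 * (V 2).1 * (V 3).2.2 + (1/32:ℝ) * (V 1).1 * (V 2).2.2 * (V 3).2.1 + (-1/32:ℝ) * (V 1).1 * (V 2).2.1 * (V 3).2.2 + (-1/32:ℝ) * (V 0).2.2 * (V 2).2.1 * (V 3).1 + (1/32:ℝ) * (V 0).2.2 * (V 2).1 * (V 3).2.1 + (1/32:ℝ) * (V 0).2.2 * (V 1).2.1 * (V 3).1 + (-1/32:ℝ) * (V 0).2.2 * (V 1).2.1 * (V 2).1 + (-1/32:ℝ) * (V 0).2.2 * (V 1).1 * (V 3).2.1 + (1/32:ℝ) * (V 0).2.2 * (V 1).1 * (V 2).2.1 + (1/32:ℝ) * (V 0).2.1 * (V 2).2.2 * (V 3).1 + (-1/32:ℝ) * (V 0).2.1 * (V 2).1 * (V 3).2.2 + (-1/32:ℝ) * (V 0).2.1 * (V 1).2.2 * (V 3).1 + (1/32:ℝ)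 * (V 0).2.1 * (V 1).2.2 * (V 2).1 + (1/32:ℝ) * (V 0).2.1 * (V 1).1 * (V 3).2.2 + (-1/32:ℝ) * (V 0).2.1 * (V 1).1 * (V 2).2.2 + (-1/32:ℝ) * (V 0).1 * (V 2).2.2 * (V 3).2.1 + (1/32:ℝ) * (V 0).1 * (V 2).2.1 * (V 3).2.2 + (1/32:ℝ) * (V 0).1 * (V 1).2.2 * (V 3).2.1 + (-1/32:ℝ) * (V 0).1 * (V 1).2.2 * (V 2).2.1 + (-1/32:ℝ) * (V 0).1 * (V 1).2.1 * (V 3).2.2 + (1/32:ℝ) * (V 0).1 * (V 1).2.1 * (V 2).2.2, ?_⟩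
  intro a b c _ _ hc
  set p : ℝ × ℝ × ℝ := duffyMap (a, b, c) with hpdef
  have hp : p.2.2 ≠ 1 := ne_of_lt hc.2
  have hone1 : (1:ℝ) - c ≠ 0 := sub_ne_zero.mpr (Ne.symm (ne_of_lt hc.2))
  have hx : HasFDerivAt (fun q : ℝ × ℝ × ℝ => q.1) (ContinuousLinearMap.fst ℝ ℝ (ℝ × ℝ)) p :=
    hasFDerivAt_fst
  have hy : HasFDerivAt (fun q : ℝ × ℝ × ℝ => q.2.1)
      ((ContinuousLinearMap.fst ℝ ℝ ℝ).comp (ContinuousLinearMap.snd ℝ ℝ (ℝ × ℝ))) p :=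
    hasFDerivAt_fst.comp p hasFDerivAt_snd
  have hz : HasFDerivAt (fun q : ℝ × ℝ × ℝ => q.2.2)
      ((ContinuousLinearMap.snd ℝ ℝ ℝ).comp (ContinuousLinearMap.snd ℝ ℝ (ℝ × ℝ))) p :=
    hasFDerivAt_snd.comp p hasFDerivAt_snd
  have hne : (2:ℝ) * (1 - p.2.2) ≠ 0 := by
    have h1 : (1:ℝ) - p.2.2 ≠ 0 := sub_ne_zero.mpr (Ne.symm hp)
    simp [h1]
  have hd := ((hasFDerivAt_const (1:ℝ) p).sub hz).const_mul (2:ℝ)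
  have hinv := (hasFDerivAt_inv' (𝕜 := ℝ) hne).comp p hd
  have hone : HasFDerivAt (fun _ : ℝ × ℝ × ℝ => (1:ℝ)) (0 : (ℝ × ℝ × ℝ) →L[ℝ] ℝ) p :=
    hasFDerivAt_const 1 p
  have hb0 : HasFDerivAt (fun q : ℝ × ℝ × ℝ =>
      (q.1 + q.2.2) * (q.2.1 + q.2.2) * (2 * (1 - q.2.2))⁻¹) _ p :=
    ((hx.add hz).mul (hy.add hz)).mul hinv
  have hb1 : HasFDerivAt (fun q : ℝ × ℝ × ℝ =>
      -((q.1 + 1) * (q.2.1 + q.2.2)) * (2 * (1 - q.2.2))⁻¹) _ p :=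
    (((hx.add hone).mul (hy.add hz)).neg).mul hinv
  have hb2 : HasFDerivAt (fun q : ℝ × ℝ × ℝ =>
      (q.1 + 1) * (q.2.1 + 1) * (2 * (1 - q.2.2))⁻¹) _ p :=
    ((hx.add hone).mul (hy.add hone)).mul hinv
  have hb3 : HasFDerivAt (fun q : ℝ × ℝ × ℝ =>
      -((q.1 + q.2.2) * (q.2.1 + 1)) * (2 * (1 - q.2.2))⁻¹) _ p :=
    (((hx.add hz).mul (hy.add hone)).neg).mul hinv
  have hb4 : HasFDerivAt (fun q : ℝ × ℝ × ℝ => (2:ℝ)⁻¹ * (1 + q.2.2)) _ p :=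
    (hone.add hz).const_mul ((2:ℝ)⁻¹)
  have hF : HasFDerivAt (fun q : ℝ × ℝ × ℝ =>
      ((q.1 + q.2.2) * (q.2.1 + q.2.2) * (2 * (1 - q.2.2))⁻¹) • V 0 +
      (-((q.1 + 1) * (q.2.1 + q.2.2)) * (2 * (1 - q.2.2))⁻¹) • V 1 +
      ((q.1 + 1) * (q.2.1 + 1) * (2 * (1 - q.2.2))⁻¹) • V 2 +
      (-((q.1 + q.2.2) * (q.2.1 + 1)) * (2 * (1 - q.2.2))⁻¹) • V 3 +
      ((2:ℝ)⁻¹ * (1 + q.2.2)) • V 4) _ p :=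
    ((((hb0.smul_const (V 0)).add (hb1.smul_const (V 1))).add
      (hb2.smul_const (V 2))).add (hb3.smul_const (V 3))).add (hb4.smul_const (V 4))
  have hvm : vertexMap V = (fun q : ℝ × ℝ × ℝ =>
      ((q.1 + q.2.2) * (q.2.1 + q.2.2) * (2 * (1 - q.2.2))⁻¹) • V 0 +
      (-((q.1 + 1) * (q.2.1 + q.2.2)) * (2 * (1 - q.2.2))⁻¹) • V 1 +
      ((q.1 + 1) * (q.2.1 + 1) * (2 * (1 - q.2.2))⁻¹) • V 2 +
      (-((q.1 + q.2.2) * (q.2.1 + 1)) * (2 * (1 - q.2.2))⁻¹) • V 3 +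
      ((2:ℝ)⁻¹ * (1 + q.2.2)) • V 4) := by
    funext q
    simp [vertexMap, Fin.sum_univ_five, bedrosian, div_eq_mul_inv, mul_comm]
  rw [← hvm] at hF
  have hdf := hF.fderiv
  have er1 : ((fderiv ℝ (vertexMap V) p) ((1:ℝ),(0:ℝ),(0:ℝ))).1 = ((-1/4:ℝ) + (1/4:ℝ)*b) * (V 0).1 + ((1/4:ℝ) + (-1/4:ℝ)*b) * (V 1).1 + ((1/4:ℝ) + (1/4:ℝ)*b) * (V 2).1 + ((-1/4:ℝ) + (-1/4:ℝ)*b) * (V 3).1 + (0:ℝ) * (V 4).1 := by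
    rw [hdf]
    simp only [hpdef, duffyMap]
    simp [ContinuousLinearMap.mulLeftRight_apply]
    field_simp
    ring
  have er2 : ((fderiv ℝ (vertexMap V) p) ((1:ℝ),(0:ℝ),(0:ℝ))).2.1 = ((-1/4:ℝ) + (1/4:ℝ)*b) * (V 0).2.1 + ((1/4:ℝ) + (-1/4:ℝ)*b) * (V 1).2.1 + ((1/4:ℝ) + (1/4:ℝ)*b) * (V 2).2.1 + ((-1/4:ℝ) + (-1/4:ℝ)*b) * (V 3).2.1 + (0:ℝ) * (V 4).2.1 := by
    rw [hdf]
    simp only [hpdef, duffyMap]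
    simp [ContinuousLinearMap.mulLeftRight_apply]
    field_simp
    ring
  have er3 : ((fderiv ℝ (vertexMap V) p) ((1:ℝ),(0:ℝ),(0:ℝ))).2.2 = ((-1/4:ℝ) + (1/4:ℝ)*b) * (V 0).2.2 + ((1/4:ℝ) + (-1/4:ℝ)*b) * (V 1).2.2 + ((1/4:ℝ) + (1/4:ℝ)*b) * (V 2).2.2 + ((-1/4:ℝ) + (-1/4:ℝ)*b) * (V 3).2.2 + (0:ℝ) * (V 4).2.2 := by
    rw [hdf]
    simp only [hpdef, duffyMap]
    simp [ContinuousLinearMap.mulLeftRight_apply]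
    field_simp
    ring
  have es1 : ((fderiv ℝ (vertexMap V) p) ((0:ℝ),(1:ℝ),(0:ℝ))).1 = ((-1/4:ℝ) + (1/4:ℝ)*a) * (V 0).1 + ((-1/4:ℝ) + (-1/4:ℝ)*a) * (V 1).1 + ((1/4:ℝ) + (1/4:ℝ)*a) * (V 2).1 + ((1/4:ℝ) + (-1/4:ℝ)*a) * (V 3).1 + (0:ℝ) * (V 4).1 := by
    rw [hdf]
    simp only [hpdef, duffyMap]
    simp [ContinuousLinearMap.mulLeftRight_apply]
    field_simp
    ring
  have es2 : ((fderiv ℝ (vertexMap V) p) ((0:ℝ),(1:ℝ),(0:ℝ))).2.1 = ((-1/4:ℝ) + (1/4:ℝ)*a) * (V 0).2.1 + ((-1/4:ℝ) + (-1/4:ℝ)*a) * (V 1).2.1 + ((1/4:ℝ) + (1/4:ℝ)*a) * (V 2).2.1 + ((1/4:ℝ) + (-1/4:ℝ)*a) * (V 3).2.1 + (0:ℝ) * (V 4).2.1 := by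
    rw [hdf]
    simp only [hpdef, duffyMap]
    simp [ContinuousLinearMap.mulLeftRight_apply]
    field_simp
    ring
  have es3 : ((fderiv ℝ (vertexMap V) p) ((0:ℝ),(1:ℝ),(0:ℝ))).2.2 = ((-1/4:ℝ) + (1/4:ℝ)*a) * (V 0).2.2 + ((-1/4:ℝ) + (-1/4:ℝ)*a) * (V 1).2.2 + ((1/4:ℝ) + (1/4:ℝ)*a) * (V 2).2.2 + ((1/4:ℝ) + (-1/4:ℝ)*a) * (V 3).2.2 + (0:ℝ) * (V 4).2.2 := by
    rw [hdf]
    simp only [hpdef, duffyMap]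
    simp [ContinuousLinearMap.mulLeftRight_apply]
    field_simp
    ring
  have et1 : ((fderiv ℝ (vertexMap V) p) ((0:ℝ),(0:ℝ),(1:ℝ))).1 = ((-3/8:ℝ) + (1/8:ℝ)*b + (1/8:ℝ)*a + (1/8:ℝ)*a*b) * (V 0).1 + ((-1/8:ℝ) + (-1/8:ℝ)*b + (-1/8:ℝ)*a + (-1/8:ℝ)*a*b) * (V 1).1 + ((1/8:ℝ) + (1/8:ℝ)*b + (1/8:ℝ)*a + (1/8:ℝ)*a*b) * (V 2).1 + ((-1/8:ℝ) + (-1/8:ℝ)*b + (-1/8:ℝ)*a + (-1/8:ℝ)*a*b) * (V 3).1 + (1/2:ℝ) * (V 4).1 := by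
    rw [hdf]
    simp only [hpdef, duffyMap]
    simp [ContinuousLinearMap.mulLeftRight_apply]
    field_simp
    ring
  have et2 : ((fderiv ℝ (vertexMap V) p) ((0:ℝ),(0:ℝ),(1:ℝ))).2.1 = ((-3/8:ℝ) + (1/8:ℝ)*b + (1/8:ℝ)*a + (1/8:ℝ)*a*b) * (V 0).2.1 + ((-1/8:ℝ) + (-1/8:ℝ)*b + (-1/8:ℝ)*a + (-1/8:ℝ)*a*b) * (V 1).2.1 + ((1/8:ℝ) + (1/8:ℝ)*b + (1/8:ℝ)*a + (1/8:ℝ)*a*b) * (V 2).2.1 + ((-1/8:ℝ) + (-1/8:ℝ)*b + (-1/8:ℝ)*a + (-1/8:ℝ)*a*b) * (V 3).2.1 + (1/2:ℝ) * (V 4).2.1 := by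
    rw [hdf]
    simp only [hpdef, duffyMap]
    simp [ContinuousLinearMap.mulLeftRight_apply]
    field_simp
    ring
  have et3 : ((fderiv ℝ (vertexMap V) p) ((0:ℝ),(0:ℝ),(1:ℝ))).2.2 = ((-3/8:ℝ) + (1/8:ℝ)*b + (1/8:ℝ)*a + (1/8:ℝ)*a*b) * (V 0).2.2 + ((-1/8:ℝ) + (-1/8:ℝ)*b + (-1/8:ℝ)*a + (-1/8:ℝ)*a*b) * (V 1).2.2 + ((1/8:ℝ) + (1/8:ℝ)*b + (1/8:ℝ)*a + (1/8:ℝ)*a*b) * (V 2).2.2 + ((-1/8:ℝ) + (-1/8:ℝ)*b + (-1/8:ℝ)*a + (-1/8:ℝ)*a*b) * (V 3).2.2 + (1/2:ℝ) * (V 4).2.2 := by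
    rw [hdf]
    simp only [hpdef, duffyMap]
    simp [ContinuousLinearMap.mulLeftRight_apply]
    field_simp
    ring
  simp only [jacobianMatrix, Matrix.det_fin_three, Matrix.of_apply, Matrix.cons_val',
    Matrix.cons_val_zero, Matrix.cons_val_one, Matrix.head_cons, Matrix.empty_val',
    Matrix.cons_val_fin_one, Matrix.head_fin_const, Matrix.cons_val_two, Matrix.tail_cons,
    er1, er2, er3, es1, es2, es3, et1, et2, et3]
  ring
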